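/- With the completion-of-squares identity holding (P solving the Riccati equation with P_T = 0, Υ = BᵀRB positive definite), the feedback control u_t = -Υ^{-1}BᵀP_t x_t minimizes the cost J(u) = (1/2)∫₀ᵀ [x_tᵀQx_t + u_tᵀΥu_t] dt over all continuous controls, and the optimal cost equals (1/2)x₀ᵀP₀x₀. -/

import Mathlib

/-!
Along any trajectory, the Riccati equation turns the derivative of `xᵀ P x` into
`(u + Kx)ᵀ Υ (u + Kx) - (xᵀ Q x + uᵀ Υ u)` with gain `K = Υ⁻¹ Bᵀ P`. Integrating over `[0, T]`
and using `P T = 0`, the cost equals `x₀ᵀ P₀ x₀` plus the integral of a nonnegative square, which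
vanishes exactly for the feedback `u = -K x`.
-/

open Matrix

theorem hasDerivAt_dotProduct_mulVec {ι κ : Type*} [Fintype ι] [Fintype κ]
    {v : ℝ → ι → ℝ} {M : ℝ → Matrix ι κ ℝ} {w : ℝ → κ → ℝ}
    {v' : ι → ℝ} {M' : Matrix ι κ ℝ} {w' : κ → ℝ} {t : ℝ}
    (hv : HasDerivAt v v' t) (hM : ∀ i j, HasDerivAt (fun s => M s i j) (M' i j) t)
    (hw : HasDerivAt w w' t) :
    HasDerivAt (fun s => v s ⬝ᵥ M s *ᵥ w s)
      (v' ⬝ᵥ M t *ᵥ w t + v t ⬝ᵥ M' *ᵥ w t + v t ⬝ᵥ M t *ᵥ w') t := by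
  have hvi := hasDerivAt_pi.mp hv
  have hwj := hasDerivAt_pi.mp hw
  have hsum : HasDerivAt (fun s => ∑ i, ∑ j, v s i * (M s i j * w s j))
      (∑ i, ∑ j, (v' i * (M t i j * w t j) + v t i * (M' i j * w t j + M t i j * w' j))) t :=
    HasDerivAt.fun_sum fun i _ => HasDerivAt.fun_sum fun j _ =>
      (hvi i).mul ((hM i j).mul (hwj j))
  convert hsum using 1
  · funext s
    simp [dotProduct, mulVec, Finset.mul_sum]
  · simp only [dotProduct, mulVec, Finset.mul_sum, ← Finset.sum_add_distrib]
    exact Finset.sum_congr rfl fun i _ => Finset.sum_congr rfl fun j _ => by ring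

theorem mulVec_dotProduct {ι κ R : Type*} [Fintype ι] [Fintype κ] [CommSemiring R]
    (M : Matrix ι κ R) (w : κ → R) (v : ι → R) : (M *ᵥ w) ⬝ᵥ v = w ⬝ᵥ Mᵀ *ᵥ v := by
  rw [dotProduct_transpose_mulVec, dotProduct_comm]

theorem riccati_completion_of_squares {ι κ : Type*} [Fintype ι] [Fintype κ] [DecidableEq κ]
    (A : Matrix ι ι ℝ) (B : Matrix ι κ ℝ) (Q : Matrix ι ι ℝ)
    {Υ : Matrix κ κ ℝ} (hΥ : Υ.IsSymm) (hΥdet : IsUnit Υ.det)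
    {P : Matrix ι ι ℝ} (hP : P.IsSymm) (x : ι → ℝ) (u : κ → ℝ) :
    (A *ᵥ x + B *ᵥ u) ⬝ᵥ P *ᵥ x
      + x ⬝ᵥ (Pᵀ * B * Υ⁻¹ * Bᵀ * P - P * A - Aᵀ * P - Q) *ᵥ x
      + x ⬝ᵥ P *ᵥ (A *ᵥ x + B *ᵥ u)
      = (u + (Υ⁻¹ * Bᵀ * P) *ᵥ x) ⬝ᵥ Υ *ᵥ (u + (Υ⁻¹ * Bᵀ * P) *ᵥ x)
        - (x ⬝ᵥ Q *ᵥ x + u ⬝ᵥ Υ *ᵥ u) := by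
  have hΥinv : (Υ⁻¹)ᵀ = Υ⁻¹ := by rw [transpose_nonsing_inv, hΥ.eq]
  have hinv_mul : ∀ v, Υ⁻¹ *ᵥ Υ *ᵥ v = v := fun v => by
    rw [mulVec_mulVec, nonsing_inv_mul Υ hΥdet, one_mulVec]
  have hmul_inv : ∀ v, Υ *ᵥ Υ⁻¹ *ᵥ v = v := fun v => by
    rw [mulVec_mulVec, mul_nonsing_inv Υ hΥdet, one_mulVec]
  simp only [add_dotProduct, dotProduct_add, mulVec_add, sub_mulVec, dotProduct_sub,
    ← mulVec_mulVec, transpose_transpose, hP.eq, hΥinv,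
    mulVec_dotProduct, hinv_mul, hmul_inv]
  ring

section LinearQuadratic

variable {ι κ : Type*} [Fintype ι] [Fintype κ] [DecidableEq κ]
  {A : Matrix ι ι ℝ} {B : Matrix ι κ ℝ} {Q : Matrix ι ι ℝ} {Υ : Matrix κ κ ℝ}
  {P : ℝ → Matrix ι ι ℝ} {u : ℝ → κ → ℝ} {x : ℝ → ι → ℝ}

theorem integral_cost_eq_add_integral_sq (hΥ : Υ.IsSymm) (hΥdet : IsUnit Υ.det)
    (hPsymm : ∀ t, (P t).IsSymm)
    (hPode : ∀ t, ∀ i j, HasDerivAt (fun s => P s i j)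
      (((P t)ᵀ * B * Υ⁻¹ * Bᵀ * P t - P t * A - Aᵀ * P t - Q) i j) t)
    (hu : Continuous u) (hx : ∀ t, HasDerivAt x (A *ᵥ x t + B *ᵥ u t) t) (a b : ℝ) :
    ∫ t in a..b, (x t ⬝ᵥ Q *ᵥ x t + u t ⬝ᵥ Υ *ᵥ u t)
      = x a ⬝ᵥ P a *ᵥ x a - x b ⬝ᵥ P b *ᵥ x b
        + ∫ t in a..b, (u t + (Υ⁻¹ * Bᵀ * P t) *ᵥ x t) ⬝ᵥ
            Υ *ᵥ (u t + (Υ⁻¹ * Bᵀ * P t) *ᵥ x t) := by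
  have hxc : Continuous x := continuous_iff_continuousAt.mpr fun t => (hx t).continuousAt
  have hPc : Continuous P := continuous_matrix fun i j =>
    continuous_iff_continuousAt.mpr fun t => (hPode t i j).continuousAt
  have hcost : Continuous fun t => x t ⬝ᵥ Q *ᵥ x t + u t ⬝ᵥ Υ *ᵥ u t :=
    (hxc.dotProduct (continuous_const.matrix_mulVec hxc)).add
      (hu.dotProduct (continuous_const.matrix_mulVec hu))
  have hw : Continuous fun t => u t + (Υ⁻¹ * Bᵀ * P t) *ᵥ x t :=
    hu.add ((continuous_const.matrix_mul hPc).matrix_mulVec hxc)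
  have hsq : Continuous fun t => (u t + (Υ⁻¹ * Bᵀ * P t) *ᵥ x t) ⬝ᵥ
      Υ *ᵥ (u t + (Υ⁻¹ * Bᵀ * P t) *ᵥ x t) :=
    hw.dotProduct (continuous_const.matrix_mulVec hw)
  have hderiv : ∀ t, HasDerivAt (fun s => x s ⬝ᵥ P s *ᵥ x s)
      ((u t + (Υ⁻¹ * Bᵀ * P t) *ᵥ x t) ⬝ᵥ Υ *ᵥ (u t + (Υ⁻¹ * Bᵀ * P t) *ᵥ x t)
        - (x t ⬝ᵥ Q *ᵥ x t + u t ⬝ᵥ Υ *ᵥ u t)) t := fun t => by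
    rw [← riccati_completion_of_squares A B Q hΥ hΥdet (hPsymm t)]
    exact hasDerivAt_dotProduct_mulVec (hx t) (hPode t) (hx t)
  have hftc := intervalIntegral.integral_eq_sub_of_hasDerivAt (fun t _ => hderiv t)
    ((hsq.sub hcost).intervalIntegrable a b)
  rw [intervalIntegral.integral_sub (hsq.intervalIntegrable a b)
    (hcost.intervalIntegrable a b)] at hftc
  linarith

end LinearQuadratic

theorem stmt4_general {n m : ℕ} (T : ℝ) (hT : 0 ≤ T)
    (A : Matrix (Fin n) (Fin n) ℝ) (B : Matrix (Fin n) (Fin m) ℝ)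
    (Q : Matrix (Fin n) (Fin n) ℝ)
    (Υ : Matrix (Fin m) (Fin m) ℝ) (hΥ : Υ.PosDef)
    (P : ℝ → Matrix (Fin n) (Fin n) ℝ)
    (hPsymm : ∀ t, (P t).IsSymm)
    (hPode : ∀ t, ∀ i j, HasDerivAt (fun s => P s i j)
      (((P t)ᵀ * B * Υ⁻¹ * Bᵀ * P t - P t * A - Aᵀ * P t - Q) i j) t)
    (hPT : P T = 0)
    (x₀ : Fin n → ℝ) :
    (∀ (u : ℝ → Fin m → ℝ) (x : ℝ → Fin n → ℝ), Continuous u →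
        (∀ t, HasDerivAt x (A *ᵥ x t + B *ᵥ u t) t) → x 0 = x₀ →
        (1 / 2 : ℝ) * (x₀ ⬝ᵥ P 0 *ᵥ x₀) ≤
          (1 / 2 : ℝ) * ∫ t in (0:ℝ)..T, (x t ⬝ᵥ Q *ᵥ x t + u t ⬝ᵥ Υ *ᵥ u t)) ∧
    (∀ (u : ℝ → Fin m → ℝ) (x : ℝ → Fin n → ℝ), Continuous u →
        (∀ t, HasDerivAt x (A *ᵥ x t + B *ᵥ u t) t) → x 0 = x₀ →
        (∀ t, u t = -((Υ⁻¹ * Bᵀ * P t) *ᵥ x t)) →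
        (1 / 2 : ℝ) * ∫ t in (0:ℝ)..T, (x t ⬝ᵥ Q *ᵥ x t + u t ⬝ᵥ Υ *ᵥ u t) =
          (1 / 2 : ℝ) * (x₀ ⬝ᵥ P 0 *ᵥ x₀)) := by
  have hΥsymm : Υ.IsSymm := by simpa [IsSymm, IsHermitian] using hΥ.isHermitian
  have hcost : ∀ (u : ℝ → Fin m → ℝ) (x : ℝ → Fin n → ℝ), Continuous u →
      (∀ t, HasDerivAt x (A *ᵥ x t + B *ᵥ u t) t) → x 0 = x₀ →
      ∫ t in (0:ℝ)..T, (x t ⬝ᵥ Q *ᵥ x t + u t ⬝ᵥ Υ *ᵥ u t)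
        = x₀ ⬝ᵥ P 0 *ᵥ x₀ + ∫ t in (0:ℝ)..T, (u t + (Υ⁻¹ * Bᵀ * P t) *ᵥ x t) ⬝ᵥ
            Υ *ᵥ (u t + (Υ⁻¹ * Bᵀ * P t) *ᵥ x t) := fun u x hu hx hx0 => by
    simpa [hPT, hx0] using
      integral_cost_eq_add_integral_sq hΥsymm hΥ.det_pos.ne'.isUnit hPsymm hPode hu hx 0 T
  constructor
  · intro u x hu hx hx0
    have hsq_nonneg : 0 ≤ ∫ t in (0:ℝ)..T, (u t + (Υ⁻¹ * Bᵀ * P t) *ᵥ x t) ⬝ᵥ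
        Υ *ᵥ (u t + (Υ⁻¹ * Bᵀ * P t) *ᵥ x t) :=
      intervalIntegral.integral_nonneg hT fun t _ => hΥ.posSemidef.dotProduct_mulVec_nonneg _
    rw [hcost u x hu hx hx0]
    linarith
  · intro u x hu hx hx0 hfeedback
    rw [hcost u x hu hx hx0]
    simp [hfeedback]

/-- The feedback control `u = -Υ⁻¹BᵀP x` minimizes the LQ cost over all continuous
controls, and the optimal cost equals `(1/2)x₀ᵀP₀x₀`. -/
theorem stmt4 {n m : ℕ} (T : ℝ) (hT : 0 ≤ T)
    (A : Matrix (Fin n) (Fin n) ℝ) (B : Matrix (Fin n) (Fin m) ℝ)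
    (Q R : Matrix (Fin n) (Fin n) ℝ) (hQ : Q.PosSemidef) (hR : R.PosSemidef)
    (Υ : Matrix (Fin m) (Fin m) ℝ) (hΥdef : Υ = Bᵀ * R * B) (hΥ : Υ.PosDef)
    (P : ℝ → Matrix (Fin n) (Fin n) ℝ)
    (hPsymm : ∀ t, (P t).IsSymm)
    (hPode : ∀ t, ∀ i j, HasDerivAt (fun s => P s i j)
      (((P t)ᵀ * B * Υ⁻¹ * Bᵀ * P t - P t * A - Aᵀ * P t - Q) i j) t)
    (hPT : P T = 0)
    (x₀ : Fin n → ℝ) :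
    (∀ (u : ℝ → Fin m → ℝ) (x : ℝ → Fin n → ℝ), Continuous u →
        (∀ t, HasDerivAt x (A *ᵥ x t + B *ᵥ u t) t) → x 0 = x₀ →
        (1 / 2 : ℝ) * (x₀ ⬝ᵥ P 0 *ᵥ x₀) ≤
          (1 / 2 : ℝ) * ∫ t in (0:ℝ)..T, (x t ⬝ᵥ Q *ᵥ x t + u t ⬝ᵥ Υ *ᵥ u t)) ∧
    (∀ (u : ℝ → Fin m → ℝ) (x : ℝ → Fin n → ℝ), Continuous u →
        (∀ t, HasDerivAt x (A *ᵥ x t + B *ᵥ u t) t) → x 0 = x₀ →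
        (∀ t, u t = -((Υ⁻¹ * Bᵀ * P t) *ᵥ x t)) →
        (1 / 2 : ℝ) * ∫ t in (0:ℝ)..T, (x t ⬝ᵥ Q *ᵥ x t + u t ⬝ᵥ Υ *ᵥ u t) =
          (1 / 2 : ℝ) * (x₀ ⬝ᵥ P 0 *ᵥ x₀)) :=
  stmt4_general T hT A B Q Υ hΥ P hPsymm hPode hPT x₀
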